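/- arXiv:2312.02455 — 3 statements merged into one kernel-verified Lean document; each statement's English description precedes it below -/
import Mathlib

section
/- For every r > 0, Φ(r)/16 ≤ Φ(2r) ≤ 3 Φ(r). -/
/-! The three terms of `Φ` are compared separately at the scales `r` and `2r`. The Gaussian term
scales exactly by `1/4`. The truncated second moment `J(r) = ∫ (|z|²/r² ∧ 1) dν` is
nonincreasing in `r` and satisfies `J(r) ≤ 4 J(2r)`. Finally `b̃_{2r} - b̃_r` is the integral of
`z` over the annulus `r < |z| ≤ 2r`, so its norm is at most `2r ν(|z| > r) ≤ 2r J(r)`. -/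

open MeasureTheory ProbabilityTheory Filter Set Topology Metric RealInnerProductSpace
open scoped ENNReal NNReal

noncomputable section

abbrev Euc (d : ℕ) : Type := EuclideanSpace ℝ (Fin d)

/-- First exit time from `B` of the process started at `x`, valued in `[0,∞]`
(`∞` if the process never leaves `B`). -/
def exitTime {Ω : Type} {d : ℕ} (Y : ℝ → Ω → Euc d) (x : Euc d) (B : Set (Euc d)) (ω : Ω) :
    ℝ≥0∞ :=
  sInf (ENNReal.ofReal '' {t : ℝ | 0 ≤ t ∧ x + Y t ω ∉ B})

/-- `E_x[τ_B]`, the expected exit time from `B` for the process started at `x`. -/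
def expExit {Ω : Type} [MeasurableSpace Ω] {d : ℕ} (P : Measure Ω) (Y : ℝ → Ω → Euc d)
    (x : Euc d) (B : Set (Euc d)) : ℝ≥0∞ :=
  ∫⁻ ω, exitTime Y x B ω ∂P

/-- `h(X_{τ_B})` on the event `{τ_B < ∞}` (and `0` elsewhere), as an `ℝ≥0∞`-valued quantity. -/
def stopVal {Ω : Type} {d : ℕ} (Y : ℝ → Ω → Euc d) (h : Euc d → ℝ) (x : Euc d)
    (B : Set (Euc d)) (ω : Ω) : ℝ≥0∞ :=
  if exitTime Y x B ω < ⊤ then ENNReal.ofReal (h (x + Y (exitTime Y x B ω).toReal ω)) else 0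

/-- `E_x[h(X_{τ_B})]` for a nonnegative `h`. -/
def expStop {Ω : Type} [MeasurableSpace Ω] {d : ℕ} (P : Measure Ω) (Y : ℝ → Ω → Euc d)
    (h : Euc d → ℝ) (x : Euc d) (B : Set (Euc d)) : ℝ≥0∞ :=
  ∫⁻ ω, stopVal Y h x B ω ∂P

/-- `h` is harmonic in the open set `U` with respect to the process `x + Y`. -/
def HarmonicOn {Ω : Type} [MeasurableSpace Ω] {d : ℕ} (P : Measure Ω) (Y : ℝ → Ω → Euc d)
    (h : Euc d → ℝ) (U : Set (Euc d)) : Prop :=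
  ∀ B : Set (Euc d), IsOpen B → IsCompact (closure B) → closure B ⊆ U → ∀ x ∈ B,
    expStop P Y h x B ≠ ⊤ ∧ ENNReal.ofReal (h x) = expStop P Y h x B

/-- `h` vanishes continuously on `E`: it is zero on `E` and continuous at every point of `E`. -/
def VanishesContinuouslyOn {d : ℕ} (h : Euc d → ℝ) (E : Set (Euc d)) : Prop :=
  (∀ z ∈ E, h z = 0) ∧ ∀ z ∈ E, ContinuousAt h z

/-- A Lévy-like process: starts at `0`, a.s. càdlàg paths,
stationary and independent increments. -/
structure IsLevyLike {Ω : Type} [MeasurableSpace Ω] {d : ℕ} (P : Measure Ω)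
    (Y : ℝ → Ω → Euc d) : Prop where
  isProb : IsProbabilityMeasure P
  meas : ∀ t : ℝ, Measurable (Y t)
  start : ∀ᵐ ω ∂P, Y 0 ω = 0
  rightCont : ∀ᵐ ω ∂P, ∀ t : ℝ, 0 ≤ t → ContinuousWithinAt (fun s => Y s ω) (Ici t) t
  leftLim : ∀ᵐ ω ∂P, ∀ t : ℝ, 0 < t → ∃ L, Tendsto (fun s => Y s ω) (𝓝[<] t) (𝓝 L)
  statInc : ∀ s t : ℝ, 0 ≤ s → s ≤ t →
    P.map (fun ω => Y t ω - Y s ω) = P.map (fun ω => Y (t - s) ω)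
  indInc : ∀ n : ℕ, ∀ τ : Fin (n + 1) → ℝ, Monotone τ → 0 ≤ τ 0 →
    iIndepFun
      (fun i : Fin n => fun ω => Y (τ i.succ) ω - Y (τ i.castSucc) ω) P

/-- The process `Y` has characteristic exponent `ψ`:
`E[exp(i⟪u, Y_t⟫)] = exp(t ψ(u))`. -/
def HasCharExponent {Ω : Type} [MeasurableSpace Ω] {d : ℕ} (P : Measure Ω)
    (Y : ℝ → Ω → Euc d) (ψ : Euc d → ℂ) : Prop :=
  ∀ u : Euc d, ∀ t : ℝ, 0 ≤ t →
    ∫ ω, Complex.exp (Complex.I * (⟪u, Y t ω⟫ : ℂ)) ∂P = Complex.exp ((t : ℂ) * ψ u)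

/-- Laplace exponent `φ(s) = s + ∫₀^∞ (1 - e^{-st}) μ(dt)` (unit drift). -/
def laplaceExp (μm : Measure ℝ) (s : ℝ) : ℝ :=
  s + ∫ t, (1 - Real.exp (-(s * t))) ∂μm

/-- `μm` is a nonzero Lévy measure of a subordinator: carried by `(0,∞)` and
`∫ (1 ∧ t) μ(dt) < ∞`. -/
def IsLevyMeasure1D (μm : Measure ℝ) : Prop :=
  μm ≠ 0 ∧ μm (Iic 0) = 0 ∧ (∫⁻ t, ENNReal.ofReal (min 1 t) ∂μm) < ⊤

/-- `μm` has a density `ρ` w.r.t. Lebesgue measure with `ρ(t) ≤ c ρ(2t)` on `(0,8)` and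
`ρ(t) ≤ c ρ(t+1)` on `(1,∞)`. -/
def HasGoodDensity (μm : Measure ℝ) : Prop :=
  ∃ ρ : ℝ → ℝ, Measurable ρ ∧ (∀ t, 0 ≤ ρ t) ∧
    μm = volume.withDensity (fun t => ENNReal.ofReal (ρ t)) ∧
    ∃ c : ℝ, 0 < c ∧ (∀ t ∈ Ioo (0 : ℝ) 8, ρ t ≤ c * ρ (2 * t)) ∧
      ∀ t ∈ Ioi (1 : ℝ), ρ t ≤ c * ρ (t + 1)

/-- Subordinate Brownian motion with Gaussian component and Laplace exponent `φ`:
a Lévy-like process with `E[exp(i⟪u, Y_t⟫)] = exp(-t φ(|u|²))`. -/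
def IsSubordinateBM {Ω : Type} [MeasurableSpace Ω] {d : ℕ} (P : Measure Ω)
    (Y : ℝ → Ω → Euc d) (φ : ℝ → ℝ) : Prop :=
  IsLevyLike P Y ∧ HasCharExponent P Y fun u => ((-(φ (‖u‖ ^ 2)) : ℝ) : ℂ)

/-- Identification of `ℝ^{d-1} × ℝ` with `ℝ^d` (the last coordinate being the real factor). -/
def embedPair (d : ℕ) (p : EuclideanSpace ℝ (Fin (d - 1)) × ℝ) : Euc d :=
  (EuclideanSpace.equiv (Fin d) ℝ).symm fun i => if h : (i : ℕ) < d - 1 then p.1 ⟨i, h⟩ else p.2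

/-- `D` is a Lipschitz domain with characteristics `(R₀, Λ₀)`. -/
def IsLipschitzDomain (d : ℕ) (D : Set (Euc d)) (R₀ Λ₀ : ℝ) : Prop :=
  IsOpen D ∧ IsConnected D ∧
    ∀ z ∈ frontier D, ∃ O : Euc d ≃ₗᵢ[ℝ] Euc d, ∃ ψ : EuclideanSpace ℝ (Fin (d - 1)) → ℝ,
      LipschitzWith Λ₀.toNNReal ψ ∧ ψ 0 = 0 ∧
      ball z R₀ ∩ D =
        (fun p : EuclideanSpace ℝ (Fin (d - 1)) × ℝ => z + O (embedPair d p)) ''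
          {p | ‖embedPair d p‖ < R₀ ∧ ψ p.1 < p.2}

/-- The last coordinate of a vector in `ℝ^d` (junk value `0` if `d = 0`). -/
def lastCoord {d : ℕ} (x : Euc d) : ℝ :=
  if h : 0 < d then x ⟨d - 1, Nat.sub_lt h Nat.one_pos⟩ else 0

/-- The truncated circular cone `Γ_θ(r)` with vertex `0`, angle `θ` and axis along the
positive last-coordinate direction. -/
def cone (d : ℕ) (θ r : ℝ) : Set (Euc d) :=
  {x | ‖x‖ < r ∧ ‖x‖ * Real.cos θ < lastCoord x}

/-- `D` satisfies the interior cone condition with common angle `θ`. -/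
def InteriorConeCondition (d : ℕ) (D : Set (Euc d)) (θ : ℝ) : Prop :=
  ∃ a₀ : ℝ, 0 < a₀ ∧ ∀ z ∈ frontier D, ∃ R : Euc d ≃ₗᵢ[ℝ] Euc d,
    LinearEquiv.det R.toLinearEquiv = 1 ∧ (fun y => z + R y) '' cone d θ a₀ ⊆ D


/-- `D` is a `C¹` domain (with a uniform modulus of continuity for the gradients of the
local boundary functions). -/
def IsC1Domain (d : ℕ) (D : Set (Euc d)) : Prop :=
  IsOpen D ∧ IsConnected D ∧
    ∃ R₀ : ℝ, 0 < R₀ ∧ ∃ f : ℝ → ℝ, (∀ s, 0 ≤ f s) ∧ f 0 = 0 ∧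
      Tendsto f (𝓝[>] 0) (𝓝 0) ∧
      ∀ z ∈ frontier D, ∃ O : Euc d ≃ₗᵢ[ℝ] Euc d, ∃ ψ : EuclideanSpace ℝ (Fin (d - 1)) → ℝ,
        ContDiff ℝ 1 ψ ∧ ψ 0 = 0 ∧ fderiv ℝ ψ 0 = 0 ∧
        (∀ a b : EuclideanSpace ℝ (Fin (d - 1)), ‖fderiv ℝ ψ a - fderiv ℝ ψ b‖ ≤ f ‖a - b‖) ∧
        ball z R₀ ∩ D =
          (fun p : EuclideanSpace ℝ (Fin (d - 1)) × ℝ => z + O (embedPair d p)) ''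
            {p | ‖embedPair d p‖ < R₀ ∧ ψ p.1 < p.2}

/-- The event that the process started at `x` leaves `B` in finite time and lands in `A`
at the exit time. -/
def exitEvent {Ω : Type} {d : ℕ} (Y : ℝ → Ω → Euc d) (x : Euc d) (B A : Set (Euc d)) :
    Set Ω :=
  {ω | exitTime Y x B ω < ⊤ ∧ x + Y (exitTime Y x B ω).toReal ω ∈ A}

/-- The hitting time `inf { t > 0 : x + Y_t ∈ A }`, valued in `[0,∞]`. -/
def hitTime {Ω : Type} {d : ℕ} (Y : ℝ → Ω → Euc d) (x : Euc d) (A : Set (Euc d)) (ω : Ω) :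
    ℝ≥0∞ :=
  sInf (ENNReal.ofReal '' {t : ℝ | 0 < t ∧ x + Y t ω ∈ A})

def quadForm (d : ℕ) (A : Matrix (Fin d) (Fin d) ℝ) (u : Euc d) : ℝ :=
  ∑ i, ∑ j, u i * A i j * u j

/-- `(A, b, ν)` is a Lévy triple: `A` symmetric nonnegative-definite, and
`ν` a measure on `ℝ^d ∖ {0}` with `∫ (|z|² ∧ 1) ν(dz) < ∞`. -/
def IsLevyTriple (d : ℕ) (A : Matrix (Fin d) (Fin d) ℝ) (b : Euc d)
    (ν : Measure (Euc d)) : Prop :=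
  A.IsSymm ∧ (∀ u : Euc d, 0 ≤ quadForm d A u) ∧ ν {0} = 0 ∧
    (∫⁻ z, ENNReal.ofReal (min (‖z‖ ^ 2) 1) ∂ν) < ⊤

/-- The Lévy–Khintchine exponent `ψ` of the triple `(A, b, ν)`. -/
def levyExponent (d : ℕ) (A : Matrix (Fin d) (Fin d) ℝ) (b : Euc d) (ν : Measure (Euc d))
    (u : Euc d) : ℂ :=
  -(1 / 2 : ℂ) * (quadForm d A u : ℂ) + Complex.I * (⟪b, u⟫ : ℂ) +
    ∫ z, (Complex.exp (Complex.I * (⟪u, z⟫ : ℂ)) - 1 -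
      (if ‖z‖ ≤ 1 then Complex.I * (⟪u, z⟫ : ℂ) else 0)) ∂ν

/-- The truncated drift `b̃_r`. -/
def btilde {d : ℕ} (b : Euc d) (ν : Measure (Euc d)) (r : ℝ) : Euc d :=
  if r ≤ 1 then b - ∫ z in {z : Euc d | r < ‖z‖ ∧ ‖z‖ ≤ 1}, z ∂ν
  else b + ∫ z in {z : Euc d | 1 < ‖z‖ ∧ ‖z‖ ≤ r}, z ∂ν

/-- Pruitt's function
`Φ(r) = r^{-2} ∑ a_{ii} + ∫ ((|z|²/r²) ∧ 1) ν(dz) + |b̃_r|/r`. -/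
def Phi (d : ℕ) (A : Matrix (Fin d) (Fin d) ℝ) (b : Euc d) (ν : Measure (Euc d))
    (r : ℝ) : ℝ :=
  (∑ i, A i i) / r ^ 2 + (∫ z, min (‖z‖ ^ 2 / r ^ 2) 1 ∂ν) + ‖btilde b ν r‖ / r

/-- The running maximum `M_t = sup_{0 ≤ s ≤ t} |Y_s|`. -/
def runMax {Ω : Type} {d : ℕ} (Y : ℝ → Ω → Euc d) (t : ℝ) (ω : Ω) : ℝ :=
  sSup {x : ℝ | ∃ s : ℝ, 0 ≤ s ∧ s ≤ t ∧ x = ‖Y s ω‖}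

/-- `Y` is a Lévy process with Lévy triple `(A, b, ν)`:
a Lévy-like process with characteristic exponent the Lévy–Khintchine exponent of `(A, b, ν)`. -/
def IsLevyProcess {Ω : Type} [MeasurableSpace Ω] {d : ℕ} (P : Measure Ω)
    (Y : ℝ → Ω → Euc d) (A : Matrix (Fin d) (Fin d) ℝ) (b : Euc d)
    (ν : Measure (Euc d)) : Prop :=
  IsLevyLike P Y ∧ HasCharExponent P Y (levyExponent d A b ν)

/-- First exit time from `B` of a process `W` (which carries its own starting point). -/
def exitTimeW {Ω : Type} {d : ℕ} (W : ℝ → Ω → Euc d) (B : Set (Euc d)) (ω : Ω) : ℝ≥0∞ :=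
  sInf (ENNReal.ofReal '' {t : ℝ | 0 ≤ t ∧ W t ω ∉ B})

/-- `W` is a Brownian motion on `ℝ^d` with generator `Δ` started at `x`:
`W_0 = x` a.s., continuous sample paths, stationary independent increments, and
`E[exp(i⟪u, W_t − W_0⟫)] = exp(−t|u|²)`. -/
def IsBM {Ω : Type} [MeasurableSpace Ω] {d : ℕ} (P : Measure Ω) (W : ℝ → Ω → Euc d)
    (x : Euc d) : Prop :=
  IsProbabilityMeasure P ∧ (∀ t : ℝ, Measurable (W t)) ∧ (∀ᵐ ω ∂P, W 0 ω = x) ∧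
    (∀ᵐ ω ∂P, ContinuousOn (fun t => W t ω) (Ici 0)) ∧
    (∀ s t : ℝ, 0 ≤ s → s ≤ t →
      P.map (fun ω => W t ω - W s ω) = P.map (fun ω => W (t - s) ω - W 0 ω)) ∧
    (∀ n : ℕ, ∀ τ : Fin (n + 1) → ℝ, Monotone τ → 0 ≤ τ 0 →
      iIndepFun
        (fun i : Fin n => fun ω => W (τ i.succ) ω - W (τ i.castSucc) ω) P) ∧
    ∀ u : Euc d, ∀ t : ℝ, 0 ≤ t →
      ∫ ω, Complex.exp (Complex.I * (⟪u, W t ω - W 0 ω⟫ : ℂ)) ∂P =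
        Complex.exp (((-(t * ‖u‖ ^ 2)) : ℝ) : ℂ)

/-- The rescaled function `f_{z₀,r}(y) = f((y − z₀)/r)`. -/
def rescale {d : ℕ} (f : Euc d → ℝ) (z₀ : Euc d) (r : ℝ) : Euc d → ℝ :=
  fun w => f (r⁻¹ • (w - z₀))

section TruncatedSecondMoment

variable {E : Type*} [NormedAddCommGroup E] [MeasurableSpace E] [OpensMeasurableSpace E]
  {ν : Measure E} {s t : ℝ}

lemma min_div_sq_le_min_div_sq {x : ℝ} (hx : 0 ≤ x) (hs : 0 < s) (hst : s ≤ t) :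
    min (x / t ^ 2) 1 ≤ min (x / s ^ 2) 1 :=
  min_le_min (div_le_div_of_nonneg_left hx (by positivity) (by gcongr)) le_rfl

lemma min_div_sq_le_mul_min_div_sq {x : ℝ} (hs : 0 < s) (hst : s ≤ t) :
    min (x / s ^ 2) 1 ≤ (t / s) ^ 2 * min (x / t ^ 2) 1 := by
  have hts : 1 ≤ (t / s) ^ 2 := one_le_pow₀ ((one_le_div hs).2 hst)
  rcases le_total (x / t ^ 2) 1 with h | h
  · have ht : t ≠ 0 := (hs.trans_le hst).ne'
    rw [min_eq_left h, show (t / s) ^ 2 * (x / t ^ 2) = x / s ^ 2 by field_simp]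
    exact min_le_left _ _
  · rw [min_eq_right h, mul_one]
    exact (min_le_right _ _).trans hts

lemma integrable_min_sq_div (hs : 0 < s) (ht : 0 < t)
    (h : Integrable (fun z : E => min (‖z‖ ^ 2 / s ^ 2) 1) ν) :
    Integrable (fun z : E => min (‖z‖ ^ 2 / t ^ 2) 1) ν := by
  have hmeas : AEStronglyMeasurable (fun z : E => min (‖z‖ ^ 2 / t ^ 2) 1) ν :=
    ((continuous_norm.pow 2).div_const _ |>.min continuous_const).aestronglyMeasurable
  refine (h.const_mul ((s / t) ^ 2 + 1)).mono hmeas (ae_of_all _ fun z => ?_)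
  have hnn : 0 ≤ min (‖z‖ ^ 2 / s ^ 2) 1 := le_min (by positivity) zero_le_one
  rw [Real.norm_of_nonneg (le_min (by positivity) zero_le_one),
    Real.norm_of_nonneg (by positivity)]
  rcases le_total s t with hst | hts
  · calc min (‖z‖ ^ 2 / t ^ 2) 1 ≤ min (‖z‖ ^ 2 / s ^ 2) 1 :=
          min_div_sq_le_min_div_sq (by positivity) hs hst
      _ ≤ ((s / t) ^ 2 + 1) * min (‖z‖ ^ 2 / s ^ 2) 1 := by nlinarith [sq_nonneg (s / t)]
  · calc min (‖z‖ ^ 2 / t ^ 2) 1 ≤ (s / t) ^ 2 * min (‖z‖ ^ 2 / s ^ 2) 1 :=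
          min_div_sq_le_mul_min_div_sq ht hts
      _ ≤ ((s / t) ^ 2 + 1) * min (‖z‖ ^ 2 / s ^ 2) 1 := by nlinarith

lemma integral_min_sq_div_le_integral_min_sq_div (hs : 0 < s) (hst : s ≤ t)
    (h : Integrable (fun z : E => min (‖z‖ ^ 2 / s ^ 2) 1) ν) :
    ∫ z, min (‖z‖ ^ 2 / t ^ 2) 1 ∂ν ≤ ∫ z, min (‖z‖ ^ 2 / s ^ 2) 1 ∂ν :=
  integral_mono (integrable_min_sq_div hs (hs.trans_le hst) h) h fun z =>
    min_div_sq_le_min_div_sq (by positivity) hs hst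

lemma integral_min_sq_div_le_mul_integral_min_sq_div (hs : 0 < s) (hst : s ≤ t)
    (h : Integrable (fun z : E => min (‖z‖ ^ 2 / s ^ 2) 1) ν) :
    ∫ z, min (‖z‖ ^ 2 / s ^ 2) 1 ∂ν ≤ (t / s) ^ 2 * ∫ z, min (‖z‖ ^ 2 / t ^ 2) 1 ∂ν := by
  rw [← integral_const_mul]
  exact integral_mono h ((integrable_min_sq_div hs (hs.trans_le hst) h).const_mul _) fun z =>
    min_div_sq_le_mul_min_div_sq hs hst

lemma measurableSet_norm_Ioc (s t : ℝ) : MeasurableSet {z : E | s < ‖z‖ ∧ ‖z‖ ≤ t} :=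
  measurable_norm measurableSet_Ioc

lemma measure_norm_gt_le_integral_min_sq_div (hs : 0 < s)
    (h : Integrable (fun z : E => min (‖z‖ ^ 2 / s ^ 2) 1) ν) :
    ν {z | s < ‖z‖} ≤ ENNReal.ofReal (∫ z, min (‖z‖ ^ 2 / s ^ 2) 1 ∂ν) := by
  have hmeas : MeasurableSet {z : E | s < ‖z‖} :=
    measurableSet_lt measurable_const measurable_norm
  rw [ofReal_integral_eq_lintegral_ofReal h
      (ae_of_all _ fun z => le_min (by positivity) zero_le_one),
    ← lintegral_indicator_one hmeas]
  refine lintegral_mono fun z => ?_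
  by_cases hz : s < ‖z‖
  · have : 1 ≤ ‖z‖ ^ 2 / s ^ 2 := (one_le_div (by positivity)).2 (by gcongr)
    simp [Set.indicator_of_mem (show z ∈ {z : E | s < ‖z‖} from hz), min_eq_right this]
  · simp [Set.indicator_of_notMem (show z ∉ {z : E | s < ‖z‖} from hz)]

lemma norm_setIntegral_norm_Ioc_le [NormedSpace ℝ E] (hs : 0 < s) (hst : s ≤ t)
    (h : Integrable (fun z : E => min (‖z‖ ^ 2 / s ^ 2) 1) ν) :
    ‖∫ z in {z : E | s < ‖z‖ ∧ ‖z‖ ≤ t}, z ∂ν‖ ≤ t * ∫ z, min (‖z‖ ^ 2 / s ^ 2) 1 ∂ν := by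
  have hmeasure : ν {z : E | s < ‖z‖ ∧ ‖z‖ ≤ t} ≤
      ENNReal.ofReal (∫ z, min (‖z‖ ^ 2 / s ^ 2) 1 ∂ν) :=
    (measure_mono fun z hz => hz.1).trans (measure_norm_gt_le_integral_min_sq_div hs h)
  calc ‖∫ z in {z : E | s < ‖z‖ ∧ ‖z‖ ≤ t}, z ∂ν‖
      ≤ t * ν.real {z : E | s < ‖z‖ ∧ ‖z‖ ≤ t} :=
        norm_setIntegral_le_of_norm_le_const (hmeasure.trans_lt ENNReal.ofReal_lt_top)
          fun z hz => hz.2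
    _ ≤ t * ∫ z, min (‖z‖ ^ 2 / s ^ 2) 1 ∂ν := by
        have ht : 0 ≤ t := hs.le.trans hst
        gcongr
        exact ENNReal.toReal_le_of_le_ofReal (integral_nonneg fun z => by positivity) hmeasure

lemma integrableOn_norm_Ioc [SecondCountableTopology E] (hs : 0 < s)
    (h : Integrable (fun z : E => min (‖z‖ ^ 2 / s ^ 2) 1) ν) (t : ℝ) :
    IntegrableOn (fun z => z) {z : E | s < ‖z‖ ∧ ‖z‖ ≤ t} ν := by
  have hfin : ν {z : E | s < ‖z‖ ∧ ‖z‖ ≤ t} ≠ ∞ :=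
    ((measure_mono fun z hz => hz.1).trans
      (measure_norm_gt_le_integral_min_sq_div hs h)).trans_lt ENNReal.ofReal_lt_top |>.ne
  refine Measure.integrableOn_of_bounded (M := t) hfin aestronglyMeasurable_id ?_
  exact (ae_restrict_iff' (measurableSet_norm_Ioc s t)).2 (ae_of_all _ fun z hz => hz.2)

lemma setIntegral_norm_Ioc_add [SecondCountableTopology E] [NormedSpace ℝ E] {m : ℝ}
    (hs : 0 < s) (hsm : s ≤ m) (hmt : m ≤ t)
    (h : Integrable (fun z : E => min (‖z‖ ^ 2 / s ^ 2) 1) ν) :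
    ∫ z in {z : E | s < ‖z‖ ∧ ‖z‖ ≤ m}, z ∂ν + ∫ z in {z : E | m < ‖z‖ ∧ ‖z‖ ≤ t}, z ∂ν =
      ∫ z in {z : E | s < ‖z‖ ∧ ‖z‖ ≤ t}, z ∂ν := by
  have hm : 0 < m := hs.trans_le hsm
  have hunion : {z : E | s < ‖z‖ ∧ ‖z‖ ≤ m} ∪ {z : E | m < ‖z‖ ∧ ‖z‖ ≤ t} =
      {z : E | s < ‖z‖ ∧ ‖z‖ ≤ t} :=
    congrArg (norm ⁻¹' ·) (Ioc_union_Ioc_eq_Ioc hsm hmt)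
  rw [← hunion]
  exact (setIntegral_union ((Ioc_disjoint_Ioc_of_le le_rfl).preimage _)
    (measurableSet_norm_Ioc m t) (integrableOn_norm_Ioc hs h m)
    (integrableOn_norm_Ioc hm (integrable_min_sq_div hs hm h) t)).symm

end TruncatedSecondMoment

lemma btilde_eq_add_setIntegral {d : ℕ} (b : Euc d) {ν : Measure (Euc d)} {s t : ℝ}
    (hs : 0 < s) (hst : s ≤ t)
    (h : Integrable (fun z : Euc d => min (‖z‖ ^ 2 / s ^ 2) 1) ν) :
    btilde b ν t = btilde b ν s + ∫ z in {z : Euc d | s < ‖z‖ ∧ ‖z‖ ≤ t}, z ∂ν := by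
  unfold btilde
  split_ifs with ht hs1 hs1
  · rw [← setIntegral_norm_Ioc_add hs hst ht h]
    abel
  · linarith
  · rw [← setIntegral_norm_Ioc_add hs hs1 (le_of_not_ge ht) h]
    abel
  · rw [← setIntegral_norm_Ioc_add one_pos (le_of_not_ge hs1) hst
      (integrable_min_sq_div hs one_pos h)]
    abel

lemma norm_btilde_sub_le {d : ℕ} (b : Euc d) {ν : Measure (Euc d)} {s t : ℝ}
    (hs : 0 < s) (hst : s ≤ t)
    (h : Integrable (fun z : Euc d => min (‖z‖ ^ 2 / s ^ 2) 1) ν) :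
    ‖btilde b ν t - btilde b ν s‖ ≤ t * ∫ z, min (‖z‖ ^ 2 / s ^ 2) 1 ∂ν := by
  rw [btilde_eq_add_setIntegral b hs hst h, add_sub_cancel_left]
  exact norm_setIntegral_norm_Ioc_le hs hst h

lemma sum_diag_nonneg_of_quadForm_nonneg {d : ℕ} {A : Matrix (Fin d) (Fin d) ℝ}
    (hA : ∀ u : Euc d, 0 ≤ quadForm d A u) : 0 ≤ ∑ i, A i i :=
  Finset.sum_nonneg fun i _ => by
    simpa [quadForm, mul_ite, ite_mul, Finset.sum_ite_eq'] using hA (EuclideanSpace.single i 1)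

theorem phi_doubling_general
    (d : ℕ) (A : Matrix (Fin d) (Fin d) ℝ) (b : Euc d)
    (ν : Measure (Euc d)) (hT : IsLevyTriple d A b ν) (r : ℝ) (hr : 0 < r) :
    Phi d A b ν r / 16 ≤ Phi d A b ν (2 * r) ∧
      Phi d A b ν (2 * r) ≤ 3 * Phi d A b ν r := by
  obtain ⟨-, hA, -, hν⟩ := hT
  have hν₁ : Integrable (fun z : Euc d => min (‖z‖ ^ 2 / 1 ^ 2) 1) ν := by
    simp only [one_pow, div_one]
    exact (lintegral_ofReal_ne_top_iff_integrable
      ((continuous_norm.pow 2).min continuous_const).aestronglyMeasurable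
      (ae_of_all _ fun z => le_min (sq_nonneg _) zero_le_one)).1 hν.ne
  have hνr := integrable_min_sq_div one_pos hr hν₁
  have hr2 : r ≤ 2 * r := by linarith
  have hJ_anti := integral_min_sq_div_le_integral_min_sq_div hr hr2 hνr
  have hJ_doubling := integral_min_sq_div_le_mul_integral_min_sq_div hr hr2 hνr
  rw [show (2 * r / r) ^ 2 = 4 by field_simp; norm_num] at hJ_doubling
  have hdrift : |‖btilde b ν (2 * r)‖ / r - ‖btilde b ν r‖ / r| ≤
      2 * ∫ z, min (‖z‖ ^ 2 / r ^ 2) 1 ∂ν := by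
    rw [← sub_div, abs_div, abs_of_pos hr, div_le_iff₀ hr, mul_right_comm]
    exact (abs_norm_sub_norm_le _ _).trans (norm_btilde_sub_le b hr hr2 hνr)
  have hTr : 0 ≤ (∑ i, A i i) / r ^ 2 :=
    div_nonneg (sum_diag_nonneg_of_quadForm_nonneg hA) (by positivity)
  have hJ₂ : 0 ≤ ∫ z, min (‖z‖ ^ 2 / (2 * r) ^ 2) 1 ∂ν :=
    integral_nonneg fun z => by positivity
  have hb₁ : 0 ≤ ‖btilde b ν r‖ / r := by positivity
  have hb₂ : 0 ≤ ‖btilde b ν (2 * r)‖ / r := by positivity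
  unfold Phi
  rw [show (∑ i, A i i) / (2 * r) ^ 2 = (∑ i, A i i) / r ^ 2 / 4 by ring,
    show ‖btilde b ν (2 * r)‖ / (2 * r) = ‖btilde b ν (2 * r)‖ / r / 2 by ring]
  constructor <;> linarith [abs_le.1 hdrift]

/-- Lemma 2.4: `Φ(r)/16 ≤ Φ(2r) ≤ 3 Φ(r)` for every `r > 0`. -/
theorem phi_doubling
    (d : ℕ) (hd : 1 ≤ d) (A : Matrix (Fin d) (Fin d) ℝ) (b : Euc d)
    (ν : Measure (Euc d)) (hT : IsLevyTriple d A b ν) (r : ℝ) (hr : 0 < r) :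
    Phi d A b ν r / 16 ≤ Phi d A b ν (2 * r) ∧
      Phi d A b ν (2 * r) ≤ 3 * Phi d A b ν r :=
  phi_doubling_general d A b ν hT r hr

end
end

section
/- Let Z be a real-valued random variable with characteristic function g(s) := E[e^{isZ}]. Then for every r > 0, P(|Z| ≤ r) ≤ (2/cos 1) · r · ∫₀^{1/r} |g(s)| ds. -/
open MeasureTheory ProbabilityTheory Filter Set Topology Metric RealInnerProductSpace
open scoped ENNReal NNReal

noncomputable section

/-! Integrating against the weight `1 - r s` on `[0, 1/r]` turns the characteristic function into
the kernel `K(x) = ∫₀^{1/r} (1 - r s) cos (s x) ds = r (1 - cos (x / r)) / x²` (Fubini):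
`∫₀^{1/r} (1 - r s) Re g(s) ds = E[K(Z)]`. The kernel is nonnegative, and for `|x| ≤ r` the
integrand satisfies `cos (s x) ≥ cos 1`, so `K(x) ≥ cos 1 / (2r)`. By Markov's inequality,
`cos 1 / (2r) · P(|Z| ≤ r) ≤ E[K(Z)] ≤ ∫₀^{1/r} |g(s)| ds`. -/

theorem one_sub_mul_mem_Icc {r s : ℝ} (hr : 0 < r) (hs : s ∈ Icc 0 r⁻¹) :
    1 - r * s ∈ Icc (0 : ℝ) 1 := by
  have : r * s ≤ 1 := (le_inv_mul_iff₀ hr).1 (by simpa using hs.2)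
  exact ⟨by linarith, by nlinarith [hs.1]⟩

namespace Real

theorem integral_one_sub_mul_mul_cos {r x : ℝ} (hr : r ≠ 0) (hx : x ≠ 0) :
    ∫ s in (0 : ℝ)..r⁻¹, (1 - r * s) * cos (s * x) = r * (1 - cos (x / r)) / x ^ 2 := by
  have hderiv : ∀ s ∈ uIcc (0 : ℝ) r⁻¹, HasDerivAt
      (fun t ↦ (1 - r * t) * sin (t * x) / x - r * cos (t * x) / x ^ 2)
      ((1 - r * s) * cos (s * x)) s := by
    intro s _
    have hsin := ((hasDerivAt_id' s).mul_const x).sin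
    have hcos := ((hasDerivAt_id' s).mul_const x).cos
    have hlin := ((hasDerivAt_id' s).const_mul r).const_sub (1 : ℝ)
    exact (((hlin.mul hsin).div_const x).sub ((hcos.const_mul r).div_const (x ^ 2))).congr_deriv
      (by field_simp; ring)
  rw [intervalIntegral.integral_eq_sub_of_hasDerivAt hderiv
    (Continuous.intervalIntegrable (by fun_prop) _ _)]
  simp only [mul_inv_cancel₀ hr, sub_self, zero_mul, mul_zero, zero_div, sin_zero, cos_zero,
    inv_mul_eq_div]
  ring

theorem integral_one_sub_mul_mul_cos_nonneg {r : ℝ} (hr : 0 < r) (x : ℝ) :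
    0 ≤ ∫ s in (0 : ℝ)..r⁻¹, (1 - r * s) * cos (s * x) := by
  rcases eq_or_ne x 0 with rfl | hx
  · refine intervalIntegral.integral_nonneg (by positivity) fun s hs ↦ ?_
    simpa using (one_sub_mul_mem_Icc hr hs).1
  · rw [integral_one_sub_mul_mul_cos hr.ne' hx]
    have : 0 ≤ 1 - cos (x / r) := sub_nonneg.2 (cos_le_one _)
    positivity

theorem cos_one_div_le_integral_one_sub_mul_mul_cos {r x : ℝ} (hr : 0 < r) (hx : |x| ≤ r) :
    cos 1 / (2 * r) ≤ ∫ s in (0 : ℝ)..r⁻¹, (1 - r * s) * cos (s * x) := by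
  have hweight : ∫ s in (0 : ℝ)..r⁻¹, (1 - r * s) = (2 * r)⁻¹ := by
    rw [intervalIntegral.integral_sub intervalIntegrable_const
      (intervalIntegral.intervalIntegrable_id.const_mul r), intervalIntegral.integral_const_mul,
      integral_id, intervalIntegral.integral_const, smul_eq_mul]
    field_simp
    ring
  calc cos 1 / (2 * r) = ∫ s in (0 : ℝ)..r⁻¹, (1 - r * s) * cos 1 := by
        rw [intervalIntegral.integral_mul_const, hweight, div_eq_inv_mul]
    _ ≤ ∫ s in (0 : ℝ)..r⁻¹, (1 - r * s) * cos (s * x) := by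
        refine intervalIntegral.integral_mono_on (by positivity)
          (Continuous.intervalIntegrable (by fun_prop) _ _)
          (Continuous.intervalIntegrable (by fun_prop) _ _) fun s hs ↦ ?_
        have hsx : |s * x| ≤ 1 := by
          rw [abs_mul, abs_of_nonneg hs.1]
          have := (one_sub_mul_mem_Icc hr hs).1
          nlinarith [abs_nonneg x]
        gcongr
        · exact (one_sub_mul_mem_Icc hr hs).1
        · rw [← cos_abs (s * x)]
          exact cos_le_cos_of_nonneg_of_le_pi (abs_nonneg _) (by linarith [pi_gt_three]) hsx

end Real

namespace MeasureTheory

variable {μ : Measure ℝ} [IsFiniteMeasure μ]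

theorem re_charFun_eq_integral_cos (t : ℝ) : (charFun μ t).re = ∫ x, Real.cos (t * x) ∂μ := by
  have hint : Integrable (fun x : ℝ ↦ Complex.exp (t * x * Complex.I)) μ :=
    (integrable_const (1 : ℝ)).mono' (by fun_prop) (ae_of_all _ fun x ↦ by
      rw [← Complex.ofReal_mul, Complex.norm_exp_ofReal_mul_I])
  rw [charFun_apply_real, ← RCLike.re_to_complex, ← integral_re hint]
  congr with x
  exact mod_cast Complex.exp_ofReal_mul_I_re (t * x)

theorem integral_intervalIntegral_mul_cos {w : ℝ → ℝ} {a b : ℝ}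
    (hw : IntervalIntegrable w volume a b) :
    ∫ x, (∫ s in a..b, w s * Real.cos (s * x)) ∂μ = ∫ s in a..b, w s * (charFun μ s).re := by
  simp_rw [re_charFun_eq_integral_cos, ← integral_const_mul]
  refine (intervalIntegral_integral_swap (f := fun s x ↦ w s * Real.cos (s * x)) ?_).symm
  exact (hw.def'.comp_fst μ).mul_bdd (by fun_prop) (ae_of_all _ fun p ↦ Real.abs_cos_le_one _)

theorem cos_one_div_mul_measureReal_abs_le_le_integral {r : ℝ} (hr : 0 < r) :
    Real.cos 1 / (2 * r) * μ.real {x | |x| ≤ r} ≤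
      ∫ x, (∫ s in (0 : ℝ)..r⁻¹, (1 - r * s) * Real.cos (s * x)) ∂μ := by
  have hcos := Real.cos_one_pos
  let K : ℝ → ℝ := fun x ↦ ∫ s in (0 : ℝ)..r⁻¹, (1 - r * s) * Real.cos (s * x)
  have hK_int : Integrable K μ := by
    refine .of_bound (intervalIntegral.continuous_parametric_intervalIntegral_of_continuous'
      (by fun_prop) _ _).aestronglyMeasurable (1 * |r⁻¹ - 0|) (ae_of_all _ fun x ↦ ?_)
    refine intervalIntegral.norm_integral_le_of_norm_le_const fun s hs ↦ ?_
    rw [uIoc_of_le (by positivity)] at hs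
    obtain ⟨h0, h1⟩ := one_sub_mul_mem_Icc hr (Ioc_subset_Icc_self hs)
    rw [norm_mul, Real.norm_of_nonneg h0]
    exact mul_le_one₀ h1 (norm_nonneg _) (Real.abs_cos_le_one _)
  calc _ ≤ Real.cos 1 / (2 * r) * μ.real {x | Real.cos 1 / (2 * r) ≤ K x} := by
        gcongr ?_ * ?_
        exact measureReal_mono fun x hx ↦ Real.cos_one_div_le_integral_one_sub_mul_mul_cos hr hx
    _ ≤ ∫ x, K x ∂μ := mul_meas_ge_le_integral_of_nonneg
        (ae_of_all _ (Real.integral_one_sub_mul_mul_cos_nonneg hr)) hK_int _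

theorem integral_intervalIntegral_one_sub_mul_mul_cos_le {r : ℝ} (hr : 0 < r) :
    ∫ x, (∫ s in (0 : ℝ)..r⁻¹, (1 - r * s) * Real.cos (s * x)) ∂μ ≤
      ∫ s in (0 : ℝ)..r⁻¹, ‖charFun μ s‖ := by
  rw [integral_intervalIntegral_mul_cos (w := fun s ↦ 1 - r * s)
    (Continuous.intervalIntegrable (by fun_prop) _ _)]
  refine intervalIntegral.integral_mono_on (by positivity)
    (Continuous.intervalIntegrable (by fun_prop) _ _)
    (Continuous.intervalIntegrable (by fun_prop) _ _) fun s hs ↦ ?_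
  obtain ⟨h0, h1⟩ := one_sub_mul_mem_Icc hr hs
  calc (1 - r * s) * (charFun μ s).re ≤ (1 - r * s) * ‖charFun μ s‖ := by
        gcongr
        exact Complex.re_le_norm _
    _ ≤ ‖charFun μ s‖ := mul_le_of_le_one_left (norm_nonneg _) h1

theorem measureReal_abs_le_le_integral_norm_charFun {r : ℝ} (hr : 0 < r) :
    μ.real {x | |x| ≤ r} ≤ 2 / Real.cos 1 * r * ∫ s in (0 : ℝ)..r⁻¹, ‖charFun μ s‖ := by
  have hcos := Real.cos_one_pos
  calc μ.real {x | |x| ≤ r}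
      = 2 / Real.cos 1 * r * (Real.cos 1 / (2 * r) * μ.real {x | |x| ≤ r}) := by
        field_simp
    _ ≤ 2 / Real.cos 1 * r * ∫ s in (0 : ℝ)..r⁻¹, ‖charFun μ s‖ := by
        gcongr
        exact (cos_one_div_mul_measureReal_abs_le_le_integral hr).trans
          (integral_intervalIntegral_one_sub_mul_mul_cos_le hr)

end MeasureTheory

/-- inequality (4.4): for a real random variable `Z` with characteristic
function `g(s) = E[e^{isZ}]`, one has `P(|Z| ≤ r) ≤ (2/cos 1) r ∫₀^{1/r} |g(s)| ds`. -/
theorem char_fn_concentration_bound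
    (Ω : Type) [MeasurableSpace Ω] (P : Measure Ω) [IsProbabilityMeasure P]
    (Z : Ω → ℝ) (hZ : Measurable Z) (r : ℝ) (hr : 0 < r) :
    P {ω | |Z ω| ≤ r} ≤
      ENNReal.ofReal ((2 / Real.cos 1) * r *
        ∫ s in (0 : ℝ)..(1 / r),
          ‖∫ ω, Complex.exp (Complex.I * ((s * Z ω : ℝ) : ℂ)) ∂P‖) := by
  have hcharFun (s : ℝ) :
      ∫ ω, Complex.exp (Complex.I * ((s * Z ω : ℝ) : ℂ)) ∂P = charFun (P.map Z) s := by
    rw [charFun_apply_real, integral_map hZ.aemeasurable (by fun_prop)]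
    simp_rw [Complex.ofReal_mul, mul_comm Complex.I]
  simp_rw [hcharFun, one_div]
  calc P {ω | |Z ω| ≤ r} = ENNReal.ofReal ((P.map Z).real {x | |x| ≤ r}) := by
        rw [map_measureReal_apply hZ (measurableSet_le measurable_abs measurable_const),
          ofReal_measureReal]
        rfl
    _ ≤ _ := ENNReal.ofReal_le_ofReal (measureReal_abs_le_le_integral_norm_charFun hr)

end
end

section
/- Let Y be a Lévy process on ℝ^d with Lévy triple (A, b, ν). Then for every t > 0 and r > 0, P( sup_{0 ≤ s ≤ 2t} |Y_s| ≤ r ) ≤ P( sup_{0 ≤ s ≤ t} |Y_s| ≤ r ) · P( sup_{0 ≤ s ≤ t} |Y_s| ≤ 2r ). -/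
open MeasureTheory ProbabilityTheory Filter Set Topology Metric RealInnerProductSpace
open scoped ENNReal NNReal

noncomputable section

/-!
On `{M_{2t} ≤ r}` we have `|Y_s| ≤ r` and `|Y_{t+s} - Y_t| ≤ 2r` for all `s ∈ [0, t]`.
Restricted to the dyadic grid of mesh `t / 2ⁿ`, these two events are functions of disjoint blocks
of independent increments, hence independent, and by stationarity the second has the probability
of `{|Y_s| ≤ 2r on the grid of [0, t]}`. As `n → ∞` the grid events `{|Y_s| ≤ c on the grid}`
decrease, and by right-continuity their intersection lies in `{M_t ≤ c}` up to a null set.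
Since `M_t` is an `sSup`, all this needs càdlàg paths to be bounded on compact intervals.
-/

section Paths

variable {E : Type*} [NormedAddCommGroup E]

theorem isBounded_image_Icc_of_cadlag {f : ℝ → E} {T : ℝ}
    (hright : ∀ s ∈ Icc 0 T, ContinuousWithinAt f (Ici s) s)
    (hleft : ∀ s ∈ Icc 0 T, 0 < s → ∃ L, Tendsto f (𝓝[<] s) (𝓝 L)) :
    Bornology.IsBounded (f '' Icc 0 T) := by
  refine isCompact_Icc.induction_on (p := fun S => Bornology.IsBounded (f '' S)) (by simp)
    (fun S S' hS h => h.subset (image_mono hS))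
    (fun S S' hS hS' => by rw [image_union]; exact hS.union hS') fun s hs => ?_
  obtain ⟨R, hR⟩ : ∃ R, ∀ᶠ v in 𝓝[Ico 0 s ∪ Ici s] s, ‖f v‖ ≤ R := by
    have hr : ∀ᶠ v in 𝓝[Ici s] s, ‖f v‖ ≤ ‖f s‖ + 1 :=
      (hright s hs).norm.eventually (eventually_le_nhds (lt_add_one _))
    rcases hs.1.eq_or_lt with rfl | hpos
    · exact ⟨_, by simpa using hr⟩
    obtain ⟨L, hL⟩ := hleft s hs hpos
    have hl : ∀ᶠ v in 𝓝[Ico 0 s] s, ‖f v‖ ≤ ‖L‖ + 1 :=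
      nhdsWithin_mono _ Ico_subset_Iio_self
        (hL.norm.eventually (eventually_le_nhds (lt_add_one _)))
    refine ⟨max (‖L‖ + 1) (‖f s‖ + 1), ?_⟩
    rw [nhdsWithin_union]
    exact Filter.eventually_sup.2 ⟨hl.mono fun v hv => hv.trans (le_max_left _ _),
      hr.mono fun v hv => hv.trans (le_max_right _ _)⟩
  refine ⟨{v | ‖f v‖ ≤ R}, nhdsWithin_mono _ ?_ hR, ?_⟩
  · intro v hv
    exact (lt_or_ge v s).imp (fun h => ⟨hv.1, h⟩) id
  · exact (Metric.isBounded_closedBall (x := (0 : E)) (r := R)).subset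
      (by rintro _ ⟨v, hv, rfl⟩; simpa using hv)

theorem norm_le_of_forall_dyadic_le {f : ℝ → E} {t c : ℝ} (ht : 0 < t)
    (hright : ∀ s ∈ Icc 0 t, ContinuousWithinAt f (Ici s) s)
    (hgrid : ∀ n : ℕ, ∀ j : Fin (2 ^ n + 1), ‖f ((j : ℕ) * (t / 2 ^ n))‖ ≤ c)
    {s : ℝ} (hs : s ∈ Icc 0 t) : ‖f s‖ ≤ c := by
  set j : ℕ → ℕ := fun n => ⌈s / (t / 2 ^ n)⌉₊
  have hstep : ∀ n : ℕ, 0 < t / 2 ^ n := fun n => by positivity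
  have hj_le : ∀ n, j n ≤ 2 ^ n := fun n => Nat.ceil_le.2 <| by
    rw [div_le_iff₀ (hstep n)]
    push_cast
    calc s ≤ t := hs.2
      _ = 2 ^ n * (t / 2 ^ n) := by field_simp
  have hlower : ∀ n, s ≤ j n * (t / 2 ^ n) := fun n =>
    (div_le_iff₀ (hstep n)).1 (Nat.le_ceil _)
  have hupper : ∀ n, j n * (t / 2 ^ n) ≤ s + t / 2 ^ n := fun n => by
    have := Nat.ceil_lt_add_one (div_nonneg hs.1 (hstep n).le)
    have := (mul_lt_mul_of_pos_right this (hstep n)).le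
    rwa [add_mul, div_mul_cancel₀ _ (hstep n).ne', one_mul] at this
  have hmesh : Tendsto (fun n : ℕ => s + t / 2 ^ n) atTop (𝓝 s) := by
    simpa using tendsto_const_nhds.add (tendsto_const_nhds.div_atTop
      (tendsto_pow_atTop_atTop_of_one_lt (one_lt_two (α := ℝ))))
  have hconv : Tendsto (fun n => (j n : ℝ) * (t / 2 ^ n)) atTop (𝓝[≥] s) :=
    tendsto_nhdsWithin_iff.2 ⟨tendsto_of_tendsto_of_tendsto_of_le_of_le tendsto_const_nhds
      hmesh hlower hupper, Eventually.of_forall hlower⟩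
  exact le_of_tendsto (Tendsto.comp (hright s hs).norm hconv) <| Eventually.of_forall fun n =>
    hgrid n ⟨j n, Nat.lt_succ_of_le (hj_le n)⟩

end Paths

theorem runMax_le_iff {Ω : Type} {d : ℕ} {Y : ℝ → Ω → Euc d} {t c : ℝ} {ω : Ω} (ht : 0 ≤ t)
    (hbdd : Bornology.IsBounded ((Y · ω) '' Icc 0 t)) :
    runMax Y t ω ≤ c ↔ ∀ s ∈ Icc 0 t, ‖Y s ω‖ ≤ c := by
  have hset : {x : ℝ | ∃ s : ℝ, 0 ≤ s ∧ s ≤ t ∧ x = ‖Y s ω‖} = (‖Y · ω‖) '' Icc 0 t := by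
    ext; simp [eq_comm, and_assoc]
  obtain ⟨C, hC⟩ := hbdd.exists_norm_le
  have habove : BddAbove ((‖Y · ω‖) '' Icc 0 t) :=
    ⟨C, by rintro _ ⟨s, hs, rfl⟩; exact hC _ (mem_image_of_mem _ hs)⟩
  rw [runMax, hset, csSup_le_iff habove ((nonempty_Icc.2 ht).image _), forall_mem_image]

theorem Fin.partialSum_succ_sub_castSucc {G : Type*} [AddCommGroup G] {n : ℕ}
    (f : Fin (n + 1) → G) (j : Fin (n + 1)) :
    Fin.partialSum (fun i => f i.succ - f i.castSucc) j = f j - f 0 := by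
  induction j using Fin.inductionOn with
  | zero => simp
  | succ j ih => rw [Fin.partialSum_succ, ih]; abel

theorem Fin.measurable_partialSum {E : Type*} [AddMonoid E] [MeasurableSpace E]
    [MeasurableAdd₂ E] {n : ℕ} :
    Measurable (Fin.partialSum : (Fin n → E) → Fin (n + 1) → E) := by
  refine measurable_pi_lambda _ fun j => ?_
  induction j using Fin.inductionOn with
  | zero => simp [measurable_const]
  | succ j ih =>
    simp only [Fin.partialSum_succ]
    exact ih.add (measurable_pi_apply j)

theorem measurableSet_forall_norm_le {ι E : Type*} [Countable ι] [NormedAddCommGroup E]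
    [MeasurableSpace E] [OpensMeasurableSpace E] (c : ℝ) :
    MeasurableSet {w : ι → E | ∀ j, ‖w j‖ ≤ c} := by
  simp only [ofPred_forall]
  exact MeasurableSet.iInter fun j => measurableSet_le (by fun_prop) measurable_const

theorem ProbabilityTheory.iIndepFun.indepFun_castAdd_natAdd {Ω β : Type*} [MeasurableSpace Ω]
    [MeasurableSpace β] {μ : Measure Ω} {m n : ℕ} {f : Fin (m + n) → Ω → β}
    (hf : iIndepFun f μ) (hmeas : ∀ i, Measurable (f i)) :
    IndepFun (fun ω (i : Fin m) => f (Fin.castAdd n i) ω)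
      (fun ω (j : Fin n) => f (Fin.natAdd m j) ω) μ := by
  have hdisj :
      Disjoint (Finset.univ.map (Fin.castAddEmb n)) (Finset.univ.map (Fin.natAddEmb m)) := by
    simp only [Finset.disjoint_left, Finset.mem_map, Finset.mem_univ, true_and]
    rintro _ ⟨i, rfl⟩ ⟨j, hj⟩
    have := congrArg Fin.val hj
    simp only [Fin.natAddEmb_apply, Fin.val_natAdd, Fin.coe_castAddEmb, Fin.val_castAdd] at this
    omega
  exact (hf.indepFun_finset _ _ hdisj hmeas).comp
    (φ := fun v i => v ⟨Fin.castAdd n i, by simp⟩) (ψ := fun v j => v ⟨Fin.natAdd m j, by simp⟩)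
    (measurable_pi_lambda _ fun _ => measurable_pi_apply _)
    (measurable_pi_lambda _ fun _ => measurable_pi_apply _)

section Grid

variable {Ω E : Type*} [NormedAddCommGroup E]

def gridIncrements (Y : ℝ → Ω → E) (a h : ℝ) (M : ℕ) (ω : Ω) : Fin M → E :=
  fun i => Y (a + (i.succ : ℕ) * h) ω - Y (a + (i.castSucc : ℕ) * h) ω

def gridEvent (Y : ℝ → Ω → E) (a h : ℝ) (M : ℕ) (c : ℝ) : Set Ω :=
  {ω | ∀ j : Fin (M + 1), ‖Y (a + (j : ℕ) * h) ω - Y a ω‖ ≤ c}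

theorem gridEvent_eq_preimage (Y : ℝ → Ω → E) (a h : ℝ) (M : ℕ) (c : ℝ) :
    gridEvent Y a h M c =
      gridIncrements Y a h M ⁻¹' (Fin.partialSum ⁻¹' {w | ∀ j, ‖w j‖ ≤ c}) := by
  ext ω
  simp only [gridEvent, mem_preimage, mem_ofPred_eq]
  refine forall_congr' fun j => ?_
  unfold gridIncrements
  rw [Fin.partialSum_succ_sub_castSucc (fun k : Fin (M + 1) => Y (a + (k : ℕ) * h) ω)]
  simp

theorem gridEvent_dyadic_antitone (Y : ℝ → Ω → E) (a t c : ℝ) :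
    Antitone fun n : ℕ => gridEvent Y a (t / 2 ^ n) (2 ^ n) c := by
  refine antitone_nat_of_succ_le fun n ω hω j => ?_
  have hrefine : (((2 * j : ℕ) : ℝ)) * (t / 2 ^ (n + 1)) = (j : ℕ) * (t / 2 ^ n) := by
    push_cast
    field_simp
    ring
  simpa only [hrefine] using hω ⟨2 * j, by have := j.is_le; rw [pow_succ]; omega⟩

end Grid

namespace IsLevyLike

variable {Ω : Type} [MeasurableSpace Ω] {P : Measure Ω} {d : ℕ} {Y : ℝ → Ω → Euc d}

theorem ae_runMax_le_iff (hY : IsLevyLike P Y) :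
    ∀ᵐ ω ∂P, ∀ t c : ℝ, 0 ≤ t → (runMax Y t ω ≤ c ↔ ∀ s ∈ Icc 0 t, ‖Y s ω‖ ≤ c) := by
  filter_upwards [hY.rightCont, hY.leftLim] with ω hright hleft t c ht
  exact runMax_le_iff ht <| isBounded_image_Icc_of_cadlag (fun s hs => hright s hs.1)
    fun s _ hs => hleft s hs

theorem measurable_gridIncrements (hY : IsLevyLike P Y) (a h : ℝ) (M : ℕ) :
    Measurable (gridIncrements Y a h M) :=
  measurable_pi_lambda _ fun _ => (hY.meas _).sub (hY.meas _)

theorem measurableSet_gridEvent (hY : IsLevyLike P Y) (a h : ℝ) (M : ℕ) (c : ℝ) :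
    MeasurableSet (gridEvent Y a h M c) := by
  rw [gridEvent_eq_preimage]
  exact hY.measurable_gridIncrements a h M
    (Fin.measurable_partialSum (measurableSet_forall_norm_le c))

theorem iIndepFun_gridIncrements (hY : IsLevyLike P Y) {a h : ℝ} (ha : 0 ≤ a) (hh : 0 ≤ h)
    (M : ℕ) : iIndepFun (fun i ω => gridIncrements Y a h M ω i) P :=
  hY.indInc M (fun j => a + (j : ℕ) * h)
    (fun i j hij => by dsimp only; gcongr; exact_mod_cast hij) (by simpa using ha)

theorem map_gridIncrements (hY : IsLevyLike P Y) {a h : ℝ} (ha : 0 ≤ a) (hh : 0 ≤ h) (M : ℕ) :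
    P.map (gridIncrements Y a h M) = Measure.pi fun _ => P.map (Y h) := by
  refine ((hY.iIndepFun_gridIncrements ha hh M).map_fun_eq_pi_map
    (f := fun i ω => gridIncrements Y a h M ω i) fun i =>
    ((measurable_pi_apply i).comp (hY.measurable_gridIncrements a h M)).aemeasurable).trans ?_
  congr 1
  funext i
  simp only [gridIncrements, Fin.val_succ, Fin.val_castSucc, Nat.cast_add, Nat.cast_one]
  rw [hY.statInc _ _ (by positivity) (by linarith)]
  exact congrArg (fun s => P.map (Y s)) (by ring)

theorem measure_gridEvent_eq (hY : IsLevyLike P Y) {a b h : ℝ} (ha : 0 ≤ a) (hb : 0 ≤ b)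
    (hh : 0 ≤ h) (M : ℕ) (c : ℝ) : P (gridEvent Y a h M c) = P (gridEvent Y b h M c) := by
  rw [gridEvent_eq_preimage, gridEvent_eq_preimage,
    ← Measure.map_apply (hY.measurable_gridIncrements _ _ _)
      (Fin.measurable_partialSum (measurableSet_forall_norm_le c)),
    ← Measure.map_apply (hY.measurable_gridIncrements _ _ _)
      (Fin.measurable_partialSum (measurableSet_forall_norm_le c)),
    hY.map_gridIncrements ha hh, hY.map_gridIncrements hb hh]

theorem measure_gridEvent_inter (hY : IsLevyLike P Y) {h : ℝ} (hh : 0 ≤ h) (M : ℕ) (c c' : ℝ) :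
    P (gridEvent Y 0 h M c ∩ gridEvent Y (M * h) h M c') =
      P (gridEvent Y 0 h M c) * P (gridEvent Y (M * h) h M c') := by
  have hindep := (hY.iIndepFun_gridIncrements le_rfl hh (M + M)).indepFun_castAdd_natAdd
    fun i => (measurable_pi_apply i).comp (hY.measurable_gridIncrements 0 h (M + M))
  have hfirst : (fun ω (i : Fin M) => gridIncrements Y 0 h (M + M) ω (Fin.castAdd M i)) =
      gridIncrements Y 0 h M := by
    funext ω i
    simp [gridIncrements]
  have hsecond : (fun ω (i : Fin M) => gridIncrements Y 0 h (M + M) ω (Fin.natAdd M i)) =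
      gridIncrements Y (M * h) h M := by
    funext ω i
    simp only [gridIncrements, Fin.val_succ, Fin.val_castSucc, Fin.val_natAdd]
    push_cast
    ring_nf
  rw [hfirst, hsecond] at hindep
  simp only [gridEvent_eq_preimage]
  exact hindep.measure_inter_preimage_eq_mul _ _
    (Fin.measurable_partialSum (measurableSet_forall_norm_le c))
    (Fin.measurable_partialSum (measurableSet_forall_norm_le c'))

theorem runMax_le_ae_le_gridEvent_inter (hY : IsLevyLike P Y) {t h : ℝ} {M : ℕ} (ht : 0 ≤ t)
    (hh : 0 ≤ h) (hMh : M * h = t) (r : ℝ) :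
    ({ω | runMax Y (2 * t) ω ≤ r} : Set Ω) ≤ᵐ[P]
      (gridEvent Y 0 h M r ∩ gridEvent Y t h M (2 * r) : Set Ω) := by
  filter_upwards [hY.ae_runMax_le_iff, hY.start] with ω hmax h0 hω
  have hle : ∀ s ∈ Icc 0 (2 * t), ‖Y s ω‖ ≤ r := (hmax _ _ (by positivity)).1 hω
  have hgrid : ∀ j : Fin (M + 1), 0 ≤ (j : ℕ) * h ∧ (j : ℕ) * h ≤ t := fun j =>
    ⟨by positivity, by rw [← hMh]; gcongr; exact_mod_cast j.is_le⟩
  refine ⟨fun j => ?_, fun j => ?_⟩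
  · simpa [h0] using hle _ ⟨(hgrid j).1, by linarith [(hgrid j).2]⟩
  · calc ‖Y (t + (j : ℕ) * h) ω - Y t ω‖ ≤ ‖Y (t + (j : ℕ) * h) ω‖ + ‖Y t ω‖ := norm_sub_le _ _
      _ ≤ r + r := add_le_add (hle _ ⟨by linarith [(hgrid j).1], by linarith [(hgrid j).2]⟩)
          (hle _ ⟨ht, by linarith⟩)
      _ = 2 * r := by ring

theorem iInter_gridEvent_ae_le_runMax_le (hY : IsLevyLike P Y) {t : ℝ} (ht : 0 < t) (c : ℝ) :
    (⋂ n : ℕ, gridEvent Y 0 (t / 2 ^ n) (2 ^ n) c : Set Ω) ≤ᵐ[P]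
      ({ω | runMax Y t ω ≤ c} : Set Ω) := by
  filter_upwards [hY.ae_runMax_le_iff, hY.start, hY.rightCont] with ω hmax h0 hright hω
  exact (hmax t c ht.le).2 fun s hs => norm_le_of_forall_dyadic_le ht
    (fun s hs => hright s hs.1) (fun n j => by simpa [h0] using mem_iInter.1 hω n j) hs

end IsLevyLike

theorem running_max_submultiplicative_general
    (d : ℕ)
    (Ω : Type) [MeasurableSpace Ω] (P : Measure Ω) (Y : ℝ → Ω → Euc d)
    (A : Matrix (Fin d) (Fin d) ℝ) (b : Euc d) (ν : Measure (Euc d))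
    (hY : IsLevyProcess P Y A b ν)
    (t r : ℝ) (ht : 0 < t) :
    P {ω | runMax Y (2 * t) ω ≤ r} ≤
      P {ω | runMax Y t ω ≤ r} * P {ω | runMax Y t ω ≤ 2 * r} := by
  obtain ⟨hL, -⟩ := hY
  have := hL.isProb
  set G : ℕ → ℝ → ℝ → Set Ω := fun n a c => gridEvent Y a (t / 2 ^ n) (2 ^ n) c
  have hlevel : ∀ n, P {ω | runMax Y (2 * t) ω ≤ r} ≤ P (G n 0 r) * P (G n 0 (2 * r)) := by
    intro n
    have hstep : ((2 ^ n : ℕ) : ℝ) * (t / 2 ^ n) = t := by push_cast; field_simp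
    have hh : 0 ≤ t / 2 ^ n := by positivity
    calc P {ω | runMax Y (2 * t) ω ≤ r} ≤ P (G n 0 r ∩ G n t (2 * r)) :=
          measure_mono_ae (hL.runMax_le_ae_le_gridEvent_inter ht.le hh hstep r)
      _ = P (G n 0 r) * P (G n t (2 * r)) := by
          simpa only [hstep] using hL.measure_gridEvent_inter hh (2 ^ n) r (2 * r)
      _ = P (G n 0 r) * P (G n 0 (2 * r)) := by rw [hL.measure_gridEvent_eq ht.le le_rfl hh]
  have hlim : ∀ c, Tendsto (fun n => P (G n 0 c)) atTop (𝓝 (P (⋂ n, G n 0 c))) := fun c =>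
    tendsto_measure_iInter_atTop (fun n => (hL.measurableSet_gridEvent _ _ _ _).nullMeasurableSet)
      (gridEvent_dyadic_antitone Y 0 t c) ⟨0, measure_ne_top _ _⟩
  calc P {ω | runMax Y (2 * t) ω ≤ r} ≤ P (⋂ n, G n 0 r) * P (⋂ n, G n 0 (2 * r)) :=
        ge_of_tendsto' (ENNReal.Tendsto.mul (hlim r) (Or.inr (measure_ne_top _ _)) (hlim _)
          (Or.inr (measure_ne_top _ _))) hlevel
    _ ≤ P {ω | runMax Y t ω ≤ r} * P {ω | runMax Y t ω ≤ 2 * r} :=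
        mul_le_mul' (measure_mono_ae (hL.iInter_gridEvent_ae_le_runMax_le ht r))
          (measure_mono_ae (hL.iInter_gridEvent_ae_le_runMax_le ht (2 * r)))

/-- inequality (4.9): submultiplicativity of the distribution of the running
maximum of a Lévy process: `P(M_{2t} ≤ r) ≤ P(M_t ≤ r) P(M_t ≤ 2r)`. -/
theorem running_max_submultiplicative
    (d : ℕ) (hd : 1 ≤ d)
    (Ω : Type) [MeasurableSpace Ω] (P : Measure Ω) (Y : ℝ → Ω → Euc d)
    (A : Matrix (Fin d) (Fin d) ℝ) (b : Euc d) (ν : Measure (Euc d))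
    (hT : IsLevyTriple d A b ν) (hY : IsLevyProcess P Y A b ν)
    (t r : ℝ) (ht : 0 < t) (hr : 0 < r) :
    P {ω | runMax Y (2 * t) ω ≤ r} ≤
      P {ω | runMax Y t ω ≤ r} * P {ω | runMax Y t ω ≤ 2 * r} :=
  running_max_submultiplicative_general d Ω P Y A b ν hY t r ht

end
end
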